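/- Let B be a block of positive integers of length n. The number of indices i in [0,n] such that both q_i(B) < √(q(B)) and q_{n−i}(B*) < √(q(B)) hold is at most 2. -/

import Mathlib

/-!
The denominator `q(L)` of `[0; L]` is the continuant `K(L)`, the top-left entry of the product
of the symmetric matrices `!![a, 1; 1, 0]` over the digits `a` of `L`. Transposing the product
shows `K(L*) = K(L)`, so `q_{n-i}(B*) = K(B_{>i})`, and multiplying out the product of a split
`L ++ M` gives `K(L) K(M) ≤ K(L ++ M) ≤ 2 K(L) K(M)`, with `K(M) ≥ 2` once `|M| ≥ 2`.
Hence if `i + 2 ≤ j` then `q(B) ≤ 2 K(B_{≤i}) K(B_{>i}) ≤ q_j(B) q_{n-i}(B*)`,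
so `i` and `j` cannot both be small split points: those lie in some `{m, m + 1}`.
-/

/-- The value `[0; a₁, …, aₙ]` of a finite block of positive integer CF digits. -/
def cfVal : List ℕ+ → ℚ
  | [] => 0
  | a :: t => 1 / (((a : ℕ) : ℚ) + cfVal t)

/-- `qI B i = q_i(B)`: the denominator of the `i`-th convergent of the block `B`. -/
def qI (B : List ℕ+) (i : ℕ) : ℕ := (cfVal (B.take i)).den

open Matrix

def digitMatrix (a : ℕ+) : Matrix (Fin 2) (Fin 2) ℕ := !![a, 1; 1, 0]

/-- `cfMatrix L = !![K(L), K(L.dropLast); K(L.tail), K(L.tail.dropLast)]`, except that the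
continuant of the "list of length `-1`" (the tail or `dropLast` of `[]`) is `0`. -/
def cfMatrix (L : List ℕ+) : Matrix (Fin 2) (Fin 2) ℕ := (L.map digitMatrix).prod

def continuant (L : List ℕ+) : ℕ := cfMatrix L 0 0

@[simp] lemma cfMatrix_nil : cfMatrix [] = 1 := rfl

lemma cfMatrix_append (L M : List ℕ+) : cfMatrix (L ++ M) = cfMatrix L * cfMatrix M := by
  simp [cfMatrix]

lemma cfMatrix_reverse (L : List ℕ+) : cfMatrix L.reverse = (cfMatrix L)ᵀ := by
  have : transpose ∘ digitMatrix = digitMatrix := by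
    funext a; ext i j; fin_cases i <;> fin_cases j <;> rfl
  simp [cfMatrix, transpose_list_prod, List.map_reverse, List.map_map, this]

lemma continuant_reverse (L : List ℕ+) : continuant L.reverse = continuant L := by
  simp [continuant, cfMatrix_reverse]

lemma continuant_cons (a : ℕ+) (t : List ℕ+) :
    continuant (a :: t) = a * continuant t + cfMatrix t 1 0 := by
  simp [continuant, cfMatrix, digitMatrix, mul_apply, Fin.sum_univ_two]

lemma cfMatrix_cons_one_zero (a : ℕ+) (t : List ℕ+) : cfMatrix (a :: t) 1 0 = continuant t := by
  simp [continuant, cfMatrix, digitMatrix, mul_apply, Fin.sum_univ_two]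

lemma continuant_le_cons (a : ℕ+) (t : List ℕ+) : continuant t ≤ continuant (a :: t) := by
  rw [continuant_cons]
  nlinarith [a.pos]

lemma continuant_pos : ∀ L : List ℕ+, 0 < continuant L
  | [] => Nat.one_pos
  | a :: t => (continuant_pos t).trans_le (continuant_le_cons a t)

lemma cfMatrix_one_zero_le_continuant : ∀ L : List ℕ+, cfMatrix L 1 0 ≤ continuant L
  | [] => by simp [continuant]
  | a :: t => by rw [cfMatrix_cons_one_zero]; exact continuant_le_cons a t

lemma cfMatrix_zero_one_le_continuant (L : List ℕ+) : cfMatrix L 0 1 ≤ continuant L := by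
  simpa [← continuant_reverse L, cfMatrix_reverse] using
    cfMatrix_one_zero_le_continuant L.reverse

lemma coprime_continuant_cfMatrix_one_zero :
    ∀ L : List ℕ+, Nat.Coprime (continuant L) (cfMatrix L 1 0)
  | [] => by simp [continuant]
  | a :: t => by
    rw [continuant_cons, cfMatrix_cons_one_zero, Nat.coprime_mul_right_add_left]
    exact (coprime_continuant_cfMatrix_one_zero t).symm

lemma cfVal_eq_div : ∀ L : List ℕ+, cfVal L = (cfMatrix L 1 0 : ℚ) / continuant L
  | [] => by simp [cfVal]
  | a :: t => by
    have hK : (0 : ℚ) < continuant t := by exact_mod_cast continuant_pos t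
    rw [cfVal, cfVal_eq_div t, continuant_cons, cfMatrix_cons_one_zero]
    push_cast
    field_simp

lemma den_cfVal (L : List ℕ+) : (cfVal L).den = continuant L := by
  have h := Rat.den_div_eq_of_coprime (a := cfMatrix L 1 0) (b := continuant L)
    (by exact_mod_cast continuant_pos L)
    (by simpa using (coprime_continuant_cfMatrix_one_zero L).symm)
  rw [cfVal_eq_div]
  simpa using h

lemma continuant_append (L M : List ℕ+) :
    continuant (L ++ M) = continuant L * continuant M + cfMatrix L 0 1 * cfMatrix M 1 0 := by
  simp [continuant, cfMatrix_append, mul_apply, Fin.sum_univ_two]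

lemma continuant_append_le (L M : List ℕ+) :
    continuant (L ++ M) ≤ 2 * continuant L * continuant M := by
  rw [continuant_append]
  nlinarith [Nat.mul_le_mul (cfMatrix_zero_one_le_continuant L) (cfMatrix_one_zero_le_continuant M)]

lemma two_le_continuant {M : List ℕ+} (h : 2 ≤ M.length) : 2 ≤ continuant M := by
  obtain ⟨a, b, t, rfl⟩ : ∃ a b t, M = a :: b :: t := by
    match M, h with
    | a :: b :: t, _ => exact ⟨a, b, t, rfl⟩
  rw [continuant_cons, cfMatrix_cons_one_zero]
  nlinarith [a.pos, continuant_pos t, continuant_pos (b :: t)]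

lemma two_mul_continuant_le_append (L : List ℕ+) {M : List ℕ+} (h : 2 ≤ M.length) :
    2 * continuant L ≤ continuant (L ++ M) := by
  rw [continuant_append]
  nlinarith [two_le_continuant h]

lemma continuant_append_append_le (L : List ℕ+) {M : List ℕ+} (N : List ℕ+)
    (h : 2 ≤ M.length) :
    continuant (L ++ M ++ N) ≤ continuant (L ++ M) * continuant (M ++ N) :=
  calc continuant (L ++ M ++ N) = continuant (L ++ (M ++ N)) := by rw [List.append_assoc]
    _ ≤ 2 * continuant L * continuant (M ++ N) := continuant_append_le _ _
    _ ≤ continuant (L ++ M) * continuant (M ++ N) := by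
      gcongr; exact two_mul_continuant_le_append L h

lemma qI_eq_continuant_take (B : List ℕ+) (i : ℕ) : qI B i = continuant (B.take i) :=
  den_cfVal _

lemma qI_reverse_eq_continuant_drop (B : List ℕ+) {i : ℕ} (hi : i ≤ B.length) :
    qI B.reverse (B.length - i) = continuant (B.drop i) := by
  rw [qI_eq_continuant_take, List.take_reverse, continuant_reverse, Nat.sub_sub_self hi]

lemma continuant_le_take_mul_drop (B : List ℕ+) {i j : ℕ} (hij : i + 2 ≤ j)
    (hj : j ≤ B.length) :
    continuant B ≤ continuant (B.take j) * continuant (B.drop i) := by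
  have hL : B.take i ++ (B.take j).drop i = B.take j := by
    conv_rhs => rw [← List.take_append_drop i (B.take j)]
    rw [List.take_take, min_eq_left (by omega)]
  have hN : (B.take j).drop i ++ B.drop j = B.drop i := by
    conv_rhs => rw [← List.take_append_drop (j - i) (B.drop i)]
    rw [List.drop_take, List.drop_drop, Nat.add_sub_cancel' (by omega)]
  have hM : 2 ≤ ((B.take j).drop i).length := by
    simp only [List.length_drop, List.length_take]; omega
  have := continuant_append_append_le (B.take i) (B.drop j) hM
  rwa [hL, hN, List.take_append_drop] at this

lemma Nat.mul_lt_of_sq_lt_of_sq_lt {x y z : ℕ} (hx : x ^ 2 < z) (hy : y ^ 2 < z) : x * y < z := by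
  rcases le_total x y with h | h <;> nlinarith

lemma Finset.card_le_two_of_forall_lt_add_two {S : Finset ℕ}
    (h : ∀ i ∈ S, ∀ j ∈ S, j < i + 2) : S.card ≤ 2 := by
  rcases S.eq_empty_or_nonempty with rfl | hS
  · simp
  · have hsub : S ⊆ Finset.Icc (S.min' hS) (S.min' hS + 1) := fun j hj =>
      Finset.mem_Icc.2 ⟨S.min'_le j hj, Nat.lt_succ_iff.1 (h _ (S.min'_mem hS) j hj)⟩
    exact (Finset.card_le_card hsub).trans (by rw [Nat.card_Icc]; omega)

/-- The number of indices `i ∈ [0, n]` with both `q_i(B) < √(q(B))` and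
`q_{n−i}(B*) < √(q(B))` is at most `2`.  (For naturals, `x < √y ↔ x² < y`.) -/
theorem cf_few_small_split_points (B : List ℕ+) :
    ((Finset.range (B.length + 1)).filter
      (fun i => (qI B i) ^ 2 < qI B B.length ∧
        (qI B.reverse (B.length - i)) ^ 2 < qI B B.length)).card ≤ 2 := by
  refine Finset.card_le_two_of_forall_lt_add_two fun i hi j hj => ?_
  simp only [Finset.mem_filter, Finset.mem_range] at hi hj
  obtain ⟨hi_le, -, hi_small⟩ := hi
  obtain ⟨hj_le, hj_small, -⟩ := hj
  by_contra! hij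
  rw [qI_reverse_eq_continuant_drop B (by omega)] at hi_small
  simp only [qI_eq_continuant_take, List.take_length] at hi_small hj_small
  exact (Nat.mul_lt_of_sq_lt_of_sq_lt hj_small hi_small).not_ge
    (continuant_le_take_mul_drop B hij (by omega))
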